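/- arXiv:2605.28674 — 7 statements merged into one kernel-verified Lean document; each statement's English description precedes it below -/
import Mathlib

section
/- The Choi–Lam polynomial CL₁(x₁,x₂,x₃,x₄) = −4x₁x₂x₃x₄ + x₁²x₂² + x₁²x₃² + x₂²x₃² + x₄⁴ satisfies CL₁ = (x₁x₃ − x₂x₃)² + (x₁x₂ − x₄²)² + 2x₁x₂(−x₃ + x₄)² for all real x₁, x₂, x₃, x₄, and consequently CL₁(x) ≥ 0 whenever x₁x₂ ≥ 0. -/
theorem choi_lam_one_identity (x₁ x₂ x₃ x₄ : ℝ) :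
    (-4*x₁*x₂*x₃*x₄ + x₁^2*x₂^2 + x₁^2*x₃^2 + x₂^2*x₃^2 + x₄^4 =
      (x₁*x₃ - x₂*x₃)^2 + (x₁*x₂ - x₄^2)^2 + 2*x₁*x₂*(-x₃ + x₄)^2) ∧
    (x₁*x₂ ≥ 0 →
      0 ≤ -4*x₁*x₂*x₃*x₄ + x₁^2*x₂^2 + x₁^2*x₃^2 + x₂^2*x₃^2 + x₄^4) := by
  constructor
  · ring
  · intro h
    nlinarith [sq_nonneg (x₁*x₃ - x₂*x₃), sq_nonneg (x₁*x₂ - x₄^2), sq_nonneg (-x₃ + x₄), mul_nonneg h (sq_nonneg (-x₃ + x₄))]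
end

section
/- The Choi–Lam polynomial CL₁(x₁,x₂,x₃,x₄) = −4x₁x₂x₃x₄ + x₁²x₂² + x₁²x₃² + x₂²x₃² + x₄⁴ is nonnegative on all of ℝ⁴. -/
/-! The two sums of squares below each carry one cross term `± 2 x₁ x₂ (⋯)²`; on whichever
side of `x₁ x₂ = 0` the point lies, one of them has that term nonnegative. -/

theorem choi_lam_one_eq_sos_add_mul_sq (x₁ x₂ x₃ x₄ : ℝ) :
    -4*x₁*x₂*x₃*x₄ + x₁^2*x₂^2 + x₁^2*x₃^2 + x₂^2*x₃^2 + x₄^4 =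
      (x₁*x₃ - x₂*x₃)^2 + (x₁*x₂ - x₄^2)^2 + 2*(x₁*x₂)*(x₄ - x₃)^2 := by
  ring

theorem choi_lam_one_eq_sos_sub_mul_sq (x₁ x₂ x₃ x₄ : ℝ) :
    -4*x₁*x₂*x₃*x₄ + x₁^2*x₂^2 + x₁^2*x₃^2 + x₂^2*x₃^2 + x₄^4 =
      (x₁*x₃ + x₂*x₃)^2 + (x₁*x₂ + x₄^2)^2 - 2*(x₁*x₂)*(x₃ + x₄)^2 := by
  ring

theorem choi_lam_one_nonneg (x₁ x₂ x₃ x₄ : ℝ) :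
    0 ≤ -4*x₁*x₂*x₃*x₄ + x₁^2*x₂^2 + x₁^2*x₃^2 + x₂^2*x₃^2 + x₄^4 := by
  rcases le_total 0 (x₁*x₂) with h | h
  · have : 0 ≤ 2*(x₁*x₂)*(x₄ - x₃)^2 :=
      mul_nonneg (mul_nonneg zero_le_two h) (sq_nonneg _)
    rw [choi_lam_one_eq_sos_add_mul_sq]
    linarith [sq_nonneg (x₁*x₃ - x₂*x₃), sq_nonneg (x₁*x₂ - x₄^2)]
  · have : 2*(x₁*x₂)*(x₃ + x₄)^2 ≤ 0 :=
      mul_nonpos_of_nonpos_of_nonneg (by linarith) (sq_nonneg _)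
    rw [choi_lam_one_eq_sos_sub_mul_sq]
    linarith [sq_nonneg (x₁*x₃ + x₂*x₃), sq_nonneg (x₁*x₂ + x₄^2)]
end

section
/- The Choi–Lam polynomial CL₂(x₁,x₂,x₃) = −3x₁²x₂²x₃² + x₁²x₃⁴ + x₁⁴x₂² + x₂⁴x₃² satisfies CL₂ = (x₁²x₂ − x₁x₃²)² + (x₂²x₃ − x₁x₂x₃)² + 2x₁x₂(x₂x₃ − x₁x₃)² for all real x₁, x₂, x₃, and hence CL₂ is nonnegative on ℝ³. -/
/-!
Two sum-of-squares-like identities cover ℝ³: one adds `2 x₁ x₂ (x₂x₃ - x₁x₃)²`, which is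
nonnegative where `x₁ x₂ ≥ 0`, the other subtracts `2 x₁ x₂ (x₁x₃ + x₂x₃)²`, which is
nonnegative where `x₁ x₂ ≤ 0`.
-/

def choiLam {R : Type*} [CommRing R] (x₁ x₂ x₃ : R) : R :=
  -3*x₁^2*x₂^2*x₃^2 + x₁^2*x₃^4 + x₁^4*x₂^2 + x₂^4*x₃^2

section CommRing

variable {R : Type*} [CommRing R] (x₁ x₂ x₃ : R)

theorem choiLam_eq_add :
    choiLam x₁ x₂ x₃ =
      (x₁^2*x₂ - x₁*x₃^2)^2 + (x₂^2*x₃ - x₁*x₂*x₃)^2 + 2*x₁*x₂*(x₂*x₃ - x₁*x₃)^2 := by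
  unfold choiLam; ring

theorem choiLam_eq_sub :
    choiLam x₁ x₂ x₃ =
      (x₁*x₃^2 + x₁^2*x₂)^2 + (x₁*x₂*x₃ + x₂^2*x₃)^2 - 2*x₁*x₂*(x₁*x₃ + x₂*x₃)^2 := by
  unfold choiLam; ring

end CommRing

theorem choiLam_nonneg {R : Type*} [CommRing R] [LinearOrder R] [IsStrictOrderedRing R]
    (x₁ x₂ x₃ : R) : 0 ≤ choiLam x₁ x₂ x₃ := by
  rcases le_total 0 (x₁*x₂) with h | h
  · have h₂ : 0 ≤ 2*x₁*x₂ := by linarith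
    rw [choiLam_eq_add]
    exact add_nonneg (add_nonneg (sq_nonneg _) (sq_nonneg _)) (mul_nonneg h₂ (sq_nonneg _))
  · have h₂ : 2*x₁*x₂ ≤ 0 := by linarith
    rw [choiLam_eq_sub, sub_eq_add_neg]
    exact add_nonneg (add_nonneg (sq_nonneg _) (sq_nonneg _))
      (neg_nonneg.mpr (mul_nonpos_of_nonpos_of_nonneg h₂ (sq_nonneg _)))

theorem choi_lam_two (x₁ x₂ x₃ : ℝ) :
    (-3*x₁^2*x₂^2*x₃^2 + x₁^2*x₃^4 + x₁^4*x₂^2 + x₂^4*x₃^2 =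
      (x₁^2*x₂ - x₁*x₃^2)^2 + (x₂^2*x₃ - x₁*x₂*x₃)^2 + 2*x₁*x₂*(x₂*x₃ - x₁*x₃)^2) ∧
    0 ≤ -3*x₁^2*x₂^2*x₃^2 + x₁^2*x₃^4 + x₁^4*x₂^2 + x₂^4*x₃^2 :=
  ⟨choiLam_eq_add x₁ x₂ x₃, choiLam_nonneg x₁ x₂ x₃⟩
end

section
/- Delzell's polynomial D(x₁,x₂,x₃,x₄) = x₁⁴x₂²x₄² + x₂⁴x₃²x₄² + x₁²x₃⁴x₄² − 3x₁²x₂²x₃²x₄² + x₃⁸ is nonnegative on ℝ⁴. -/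
/-!
Delzell's polynomial is even in `x₂`, so we may assume `x₁ x₂ ≥ 0`. There it is the sum of
squares `(x₁²x₂x₄ - x₁x₃²x₄)² + (x₂²x₃x₄ - x₁x₂x₃x₄)² + (x₃⁴)²` plus the nonnegative term
`2 x₁x₂ (x₁x₃x₄ - x₂x₃x₄)²`.
-/

section Delzell

variable {R : Type*}

def delzell [CommRing R] (x₁ x₂ x₃ x₄ : R) : R :=
  x₁^4*x₂^2*x₄^2 + x₂^4*x₃^2*x₄^2 + x₁^2*x₃^4*x₄^2 - 3*x₁^2*x₂^2*x₃^2*x₄^2 + x₃^8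

theorem delzell_neg_snd [CommRing R] (x₁ x₂ x₃ x₄ : R) :
    delzell x₁ (-x₂) x₃ x₄ = delzell x₁ x₂ x₃ x₄ := by
  unfold delzell; ring

theorem delzell_eq_sum_sq_add [CommRing R] (x₁ x₂ x₃ x₄ : R) :
    delzell x₁ x₂ x₃ x₄ = (x₁^2*x₂*x₄ - x₁*x₃^2*x₄)^2 + (x₂^2*x₃*x₄ - x₁*x₂*x₃*x₄)^2
      + (x₃^4)^2 + 2*(x₁*x₂)*(x₁*x₃*x₄ - x₂*x₃*x₄)^2 := by
  unfold delzell; ring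

theorem delzell_nonneg_of_mul_nonneg [CommRing R] [LinearOrder R] [IsStrictOrderedRing R]
    {x₁ x₂ : R} (h : 0 ≤ x₁ * x₂) (x₃ x₄ : R) : 0 ≤ delzell x₁ x₂ x₃ x₄ := by
  rw [delzell_eq_sum_sq_add]
  positivity

theorem zero_le_delzell [CommRing R] [LinearOrder R] [IsStrictOrderedRing R]
    (x₁ x₂ x₃ x₄ : R) : 0 ≤ delzell x₁ x₂ x₃ x₄ := by
  rcases le_total 0 (x₁ * x₂) with h | h
  · exact delzell_nonneg_of_mul_nonneg h x₃ x₄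
  · rw [← delzell_neg_snd]
    exact delzell_nonneg_of_mul_nonneg (by rwa [mul_neg, neg_nonneg]) x₃ x₄

end Delzell

theorem delzell_nonneg (x₁ x₂ x₃ x₄ : ℝ) :
    0 ≤ x₁^4*x₂^2*x₄^2 + x₂^4*x₃^2*x₄^2 + x₁^2*x₃^4*x₄^2 - 3*x₁^2*x₂^2*x₃^2*x₄^2 + x₃^8 :=
  zero_le_delzell x₁ x₂ x₃ x₄
end

section
/- Let Q ∈ ℝ^{n×n} be symmetric and suppose there exist finitely many invertible matrices V₁, …, V_r ∈ ℝ^{n×n} whose simplicial cones cover the nonnegative orthant (i.e., every x ≥ 0 can be written as V_k z for some k and some z ≥ 0), and for each k suppose V_kᵀ Q V_k = P_k + N_k where P_k is positive semidefinite and N_k has all entries nonnegative. Then Q is copositive: xᵀQx ≥ 0 for all x ≥ 0. -/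
open Matrix

namespace Matrix

variable {m n : Type*} [Fintype m] [Fintype n]

theorem mulVec_dotProduct_mulVec_mulVec {R : Type*} [CommSemiring R] (V : Matrix m n R)
    (Q : Matrix m m R) (z : n → R) : V *ᵥ z ⬝ᵥ Q *ᵥ (V *ᵥ z) = z ⬝ᵥ (Vᵀ * Q * V) *ᵥ z := by
  rw [dotProduct_mulVec, vecMul_mulVec, ← dotProduct_mulVec, mulVec_mulVec]

theorem dotProduct_mulVec_nonneg_of_nonneg {R : Type*} [Semiring R] [PartialOrder R]
    [IsOrderedRing R] {N : Matrix m n R} (hN : ∀ i j, 0 ≤ N i j) {v : m → R} {w : n → R}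
    (hv : 0 ≤ v) (hw : 0 ≤ w) : 0 ≤ v ⬝ᵥ N *ᵥ w :=
  dotProduct_nonneg_of_nonneg hv fun i => dotProduct_nonneg_of_nonneg (hN i) hw

theorem dotProduct_add_mulVec_nonneg {P N : Matrix n n ℝ} (hP : P.PosSemidef)
    (hN : ∀ i j, 0 ≤ N i j) {z : n → ℝ} (hz : 0 ≤ z) : 0 ≤ z ⬝ᵥ (P + N) *ᵥ z := by
  rw [add_mulVec, dotProduct_add]
  have hPz : 0 ≤ z ⬝ᵥ P *ᵥ z := by simpa using hP.dotProduct_mulVec_nonneg z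
  exact add_nonneg hPz (dotProduct_mulVec_nonneg_of_nonneg hN hz hz)

end Matrix

theorem disjunctive_PN_copositive_general (n r : ℕ) (Q : Matrix (Fin n) (Fin n) ℝ)
    (V P N : Fin r → Matrix (Fin n) (Fin n) ℝ)
    (hcover : ∀ x : Fin n → ℝ, (∀ i, 0 ≤ x i) →
      ∃ k, ∃ z : Fin n → ℝ, (∀ i, 0 ≤ z i) ∧ x = (V k).mulVec z)
    (hdecomp : ∀ k, (V k)ᵀ * Q * (V k) = P k + N k)
    (hP : ∀ k, (P k).PosSemidef)
    (hN : ∀ k i j, 0 ≤ N k i j) :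
    ∀ x : Fin n → ℝ, (∀ i, 0 ≤ x i) → 0 ≤ x ⬝ᵥ Q.mulVec x := by
  intro x hx
  obtain ⟨k, z, hz, rfl⟩ := hcover x hx
  rw [mulVec_dotProduct_mulVec_mulVec, hdecomp k]
  exact dotProduct_add_mulVec_nonneg (hP k) (hN k) hz

theorem disjunctive_PN_copositive (n r : ℕ) (Q : Matrix (Fin n) (Fin n) ℝ)
    (hQ : Q.IsSymm)
    (V P N : Fin r → Matrix (Fin n) (Fin n) ℝ)
    (hVinv : ∀ k, IsUnit (V k).det)
    (hcover : ∀ x : Fin n → ℝ, (∀ i, 0 ≤ x i) →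
      ∃ k, ∃ z : Fin n → ℝ, (∀ i, 0 ≤ z i) ∧ x = (V k).mulVec z)
    (hdecomp : ∀ k, (V k)ᵀ * Q * (V k) = P k + N k)
    (hP : ∀ k, (P k).PosSemidef)
    (hN : ∀ k i j, 0 ≤ N k i j) :
    ∀ x : Fin n → ℝ, (∀ i, 0 ≤ x i) → 0 ≤ x ⬝ᵥ Q.mulVec x :=
  disjunctive_PN_copositive_general n r Q V P N hcover hdecomp hP hN
end

section
/- The 5×5 Horn matrix H, with H_{ii} = 1 and off-diagonal sign pattern as given, is copositive: xᵀHx ≥ 0 for every componentwise nonnegative x ∈ ℝ⁵. Equivalently, for all x₁,…,x₅ ≥ 0, (x₁−x₂+x₃+x₄−x₅)² + 4x₂x₄ + 4x₃(x₅−x₄) ≥ 0 and (x₁−x₂+x₃−x₄+x₅)² + 4x₂x₅ + 4x₄(x₃−x₅) ≥ 0 together cover all cases, yielding xᵀHx ≥ 0. -/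
open Matrix

theorem horn_copositive :
    ∀ x : Fin 5 → ℝ, (∀ i, 0 ≤ x i) →
      0 ≤ x ⬝ᵥ (Matrix.of ![![(1:ℝ),-1,1,1,-1], ![-1,1,-1,1,1], ![1,-1,1,-1,1],
          ![1,1,-1,1,-1], ![-1,1,1,-1,1]]).mulVec x := by
  intro x hx
  have h0 := hx 0; have h1 := hx 1; have h2 := hx 2; have h3 := hx 3; have h4 := hx 4
  simp only [dotProduct, mulVec, Fin.sum_univ_five, Matrix.of_apply]
  simp [Fin.sum_univ_five, Matrix.vecHead, Matrix.vecTail]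
  rcases le_total (x 3) (x 4) with h | h
  · nlinarith [sq_nonneg (x 0 - x 1 + x 2 + x 3 - x 4), mul_nonneg h1 h3, mul_nonneg h2 (sub_nonneg.2 h)]
  · rcases le_total (x 4) (x 2) with h' | h'
    · nlinarith [sq_nonneg (x 0 - x 1 + x 2 - x 3 + x 4), mul_nonneg h1 h4, mul_nonneg h3 (sub_nonneg.2 h')]
    · nlinarith [sq_nonneg (x 4 - x 0 + x 1 + x 2 - x 3), mul_nonneg h0 h2, mul_nonneg h1 (sub_nonneg.2 (le_trans h' h))]
end

section
/- Let α, β be n-tuples of nonnegative integers with Σᵢ αᵢ = Σᵢ βᵢ = m ≥ 1 and ‖α − β‖₂ = √2 (viewing α, β as vectors in ℝⁿ). Then the normalized vectors satisfy ‖α/‖α‖₂ − β/‖β‖₂‖₂ ≤ 2√(2n)/m. -/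
/-! Writing `‖x‖ • (x̂ - ŷ) = (x - y) + (‖y‖ - ‖x‖) • ŷ` for the unit vectors `x̂, ŷ` shows that
normalizing moves nearby vectors apart by at most `2 ‖x - y‖ / ‖x‖`. Here `‖α - β‖ = √2`, and
Cauchy–Schwarz against the all-ones vector gives `m = ∑ αᵢ ≤ √n ‖α‖`. -/

open NormedSpace

lemma NormedSpace.norm_normalize_le_one {E : Type*} [NormedAddCommGroup E] [NormedSpace ℝ E]
    (y : E) : ‖normalize y‖ ≤ 1 := by
  rcases eq_or_ne y 0 with rfl | hy
  · simp
  · exact (norm_normalize hy).le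

theorem NormedSpace.norm_normalize_sub_normalize_le {E : Type*} [NormedAddCommGroup E]
    [NormedSpace ℝ E] {x : E} (hx : x ≠ 0) (y : E) :
    ‖normalize x - normalize y‖ ≤ 2 * ‖x - y‖ / ‖x‖ := by
  have hx' : 0 < ‖x‖ := norm_pos_iff.mpr hx
  have hdecomp : ‖x‖ • (normalize x - normalize y) = (x - y) + (‖y‖ - ‖x‖) • normalize y := by
    rw [smul_sub, sub_smul, norm_smul_normalize, norm_smul_normalize]
    abel
  rw [le_div_iff₀ hx', mul_comm]
  calc ‖x‖ * ‖normalize x - normalize y‖ = ‖(x - y) + (‖y‖ - ‖x‖) • normalize y‖ := by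
        rw [← hdecomp, norm_smul, norm_norm]
    _ ≤ ‖x - y‖ + |‖y‖ - ‖x‖| * ‖normalize y‖ := by
        grw [norm_add_le, norm_smul, Real.norm_eq_abs]
    _ ≤ ‖x - y‖ + ‖x - y‖ * 1 := by
        gcongr
        · rw [abs_sub_comm]; exact abs_norm_sub_norm_le x y
        · exact norm_normalize_le_one y
    _ = 2 * ‖x - y‖ := by ring

theorem EuclideanSpace.sum_le_sqrt_card_mul_norm {ι : Type*} [Fintype ι]
    (x : EuclideanSpace ℝ ι) : ∑ i, x i ≤ √(Fintype.card ι) * ‖x‖ := by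
  have hcs : (∑ i, x i) ^ 2 ≤ (√(Fintype.card ι) * ‖x‖) ^ 2 := by
    rw [mul_pow, Real.sq_sqrt (Nat.cast_nonneg _), EuclideanSpace.norm_sq_eq]
    simpa using sq_sum_le_card_mul_sum_sq (s := Finset.univ) (f := x)
  exact abs_le_of_sq_le_sq' hcs (by positivity) |>.2

theorem normalized_lattice_points_close_general (n m : ℕ) (hm : 0 < m)
    (α β : EuclideanSpace ℝ (Fin n))
    (hαsum : ∑ i, α i = m)
    (hdist : ‖α - β‖^2 = 2) :
    ‖(‖α‖⁻¹ • α) - (‖β‖⁻¹ • β)‖ ≤ 2 * Real.sqrt (2*n) / m := by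
  have hm' : (0 : ℝ) < m := by exact_mod_cast hm
  have hαm : (m : ℝ) ≤ √n * ‖α‖ := by
    simpa [hαsum] using EuclideanSpace.sum_le_sqrt_card_mul_norm α
  have hα : 0 < ‖α‖ := pos_of_mul_pos_right (hm'.trans_le hαm) (Real.sqrt_nonneg _)
  have hαβ : ‖α - β‖ = √2 := by rw [← hdist, Real.sqrt_sq (norm_nonneg _)]
  calc ‖(‖α‖⁻¹ • α) - (‖β‖⁻¹ • β)‖ ≤ 2 * ‖α - β‖ / ‖α‖ :=
        norm_normalize_sub_normalize_le (norm_pos_iff.mp hα) β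
    _ = 2 * √2 / ‖α‖ := by rw [hαβ]
    _ ≤ 2 * √(2 * n) / m := by
        rw [div_le_div_iff₀ hα hm', Real.sqrt_mul zero_le_two, mul_assoc 2, mul_assoc 2,
          mul_assoc]
        gcongr

theorem normalized_lattice_points_close (n m : ℕ) (hm : 0 < m)
    (α β : EuclideanSpace ℝ (Fin n))
    (hαint : ∀ i, ∃ k : ℕ, α i = k) (hβint : ∀ i, ∃ k : ℕ, β i = k)
    (hαsum : ∑ i, α i = m) (hβsum : ∑ i, β i = m)
    (hdist : ‖α - β‖^2 = 2) :
    ‖(‖α‖⁻¹ • α) - (‖β‖⁻¹ • β)‖ ≤ 2 * Real.sqrt (2*n) / m :=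
  normalized_lattice_points_close_general n m hm α β hαsum hdist
end
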